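/- Let F₂ be the free group on two generators x and y. The quotient of ℤ[F₂] by the additive subgroup generated by all elements [g] − [(xy)ᵃ·g·(xy)ᵇ] (g ∈ F₂, a, b ∈ ℤ), all elements [g] − [g⁻¹] (g ∈ F₂), the element [1], and all elements [g] − [g·x⁻¹] (g ∈ F₂) is the trivial group. -/

import Mathlib

noncomputable section

/-- The free group on two generators `x` and `y`. -/
abbrev F2 := FreeGroup (Fin 2)

/-- The generator `x`. -/
def x : F2 := FreeGroup.of 0

/-- The generator `y`. -/
def y : F2 := FreeGroup.of 1

/-- The basis element `[g]` of the free abelian group `ℤ[F₂]`. -/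
def e (g : F2) : F2 →₀ ℤ := Finsupp.single g 1

/-- The additive subgroup of `ℤ[F₂]` generated by all `[g] − [(xy)ᵃ·g·(xy)ᵇ]`,
all `[g] − [g⁻¹]`, the element `[1]`, and all `[g] − [g·x⁻¹]`. -/
def qRel : AddSubgroup (F2 →₀ ℤ) :=
  AddSubgroup.closure
    ({v | ∃ (g : F2) (a b : ℤ), v = e g - e ((x * y) ^ a * g * (x * y) ^ b)} ∪
      {v | ∃ g : F2, v = e g - e g⁻¹} ∪ {e (1 : F2)} ∪
      {v | ∃ g : F2, v = e g - e (g * x⁻¹)})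

lemma mem1 (g : F2) (a b : ℤ) : e g - e ((x * y) ^ a * g * (x * y) ^ b) ∈ qRel :=
  AddSubgroup.subset_closure (Or.inl (Or.inl (Or.inl ⟨g, a, b, rfl⟩)))

lemma mem2 (g : F2) : e g - e g⁻¹ ∈ qRel :=
  AddSubgroup.subset_closure (Or.inl (Or.inl (Or.inr ⟨g, rfl⟩)))

lemma mem3 : e (1 : F2) ∈ qRel :=
  AddSubgroup.subset_closure (Or.inl (Or.inr rfl))

lemma mem4 (g : F2) : e g - e (g * x⁻¹) ∈ qRel :=
  AddSubgroup.subset_closure (Or.inr ⟨g, rfl⟩)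

lemma lmx (g : F2) : e g - e (x * g) ∈ qRel := by
  have h : e g - e (x * g) =
      (e g - e g⁻¹) + (e g⁻¹ - e (g⁻¹ * x⁻¹)) - (e (x * g) - e (x * g)⁻¹) := by
    rw [mul_inv_rev]; abel
  rw [h]
  exact qRel.sub_mem (qRel.add_mem (mem2 g) (mem4 g⁻¹)) (mem2 (x * g))

lemma lmxy (g : F2) : e g - e (x * y * g) ∈ qRel := by
  have := mem1 g 1 0
  simpa using this

lemma lmy (g : F2) : e g - e (y * g) ∈ qRel := by
  have h : e g - e (y * g) =
      (e g - e (x * y * g)) - (e (y * g) - e (x * (y * g))) := by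
    rw [mul_assoc]; abel
  rw [h]
  exact qRel.sub_mem (lmxy g) (lmx (y * g))

lemma key (g : F2) : ∀ h : F2, e (g * h) - e h ∈ qRel := by
  induction g using FreeGroup.induction_on with
  | C1 => intro h; simpa using qRel.zero_mem
  | of i =>
    intro h
    fin_cases i
    · show e (x * h) - e h ∈ qRel
      have := qRel.neg_mem (lmx h)
      rwa [neg_sub] at this
    · show e (y * h) - e h ∈ qRel
      have := qRel.neg_mem (lmy h)
      rwa [neg_sub] at this
  | inv_of i ih =>
    intro h
    have h2 := ih ((pure i : F2)⁻¹ * h)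
    have h3 : (pure i : F2) * ((pure i : F2)⁻¹ * h) = h := by group
    rw [show FreeGroup.of i * ((pure i : F2)⁻¹ * h) = h from h3] at h2
    have h4 : e ((pure i : F2)⁻¹ * h) - e h =
        -(e h - e ((pure i : F2)⁻¹ * h)) := by abel
    show e ((pure i : F2)⁻¹ * h) - e h ∈ qRel
    rw [h4]
    exact qRel.neg_mem h2
  | mul g₁ g₂ ih₁ ih₂ =>
    intro h
    have h1 := ih₁ (g₂ * h)
    have h2 := ih₂ h
    have h3 : e (g₁ * g₂ * h) - e h =
        (e (g₁ * (g₂ * h)) - e (g₂ * h)) + (e (g₂ * h) - e h) := by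
      rw [mul_assoc]; abel
    rw [h3]
    exact qRel.add_mem h1 h2

lemma eg_mem (g : F2) : e g ∈ qRel := by
  have h := key g 1
  have h2 : e g = (e (g * 1) - e 1) + e 1 := by rw [mul_one]; abel
  rw [h2]
  exact qRel.add_mem h mem3

lemma qRel_top : ∀ v : F2 →₀ ℤ, v ∈ qRel := by
  intro v
  induction v using Finsupp.induction with
  | zero => exact qRel.zero_mem
  | single_add g n f _ _ ih =>
    have : Finsupp.single g n = n • e g := by
      simp [e, Finsupp.smul_single]
    rw [this]
    exact qRel.add_mem (qRel.zsmul_mem (eg_mem g) n) ih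

theorem stmt13 : Subsingleton ((F2 →₀ ℤ) ⧸ qRel) := by
  constructor
  intro a b
  obtain ⟨a, rfl⟩ := QuotientAddGroup.mk_surjective a
  obtain ⟨b, rfl⟩ := QuotientAddGroup.mk_surjective b
  rw [QuotientAddGroup.eq]
  exact qRel_top _
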